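/- arXiv:1206.4238 — 5 statements merged into one kernel-verified Lean document; each statement's English description precedes it below -/
import Mathlib

section
/- Let K ⊂ ℝ^N be a convex body containing the origin in its interior, let G ⊂ ℝ^N be a bounded measurable set with positive Lebesgue measure which is uniformly K-dense, and let φ : [0, ∞) → [0, ∞) be of the form φ(t) = μ([0, t)) for a locally finite Borel measure μ, with φ convex and strictly increasing. Then there exists s > 0 such that the open sublevel set A = {x ∈ ℝ^N : f^φ(x) < s} of the function f^φ(x) = ∫_G φ(‖y − x‖_K) dy satisfies A ⊆ G ⊆ Ā and ∂G = ∂A = {x : f^φ(x) = s} ∩ Ā. -/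
open MeasureTheory Set Pointwise
open scoped ENNReal

open Metric Bornology Filter Topology

/-!
The potential `F = f^φ` is convex, because `gauge K` is sublinear and `φ` is convex and
nondecreasing. By Tonelli, `F x = ∫_{t ≥ 0} vol (G \ (x + tK)) dμ(t)`, so uniform `K`-density
makes `F` equal to one constant `s` on `∂G`. Strict monotonicity of `φ` makes `F` strictly
midpoint convex at every point of the support of `vol|G`, so `F` has no local maximum there.

A convex function equal to `s` on the boundary of a bounded set is `≤ s` on its closure, since
every point of the closure lies on a chord between two boundary points. Hence `int G ⊆ {F < s}`,
as a point of `int G` with `F = s` would be a local maximum. Conversely `{F < s}` is connected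
and misses `∂G`, and it meets `closure G`: `∂{F ≤ s}` is null, so `{F ≤ s}` has an interior point
in the support of `vol|G`, where `F < s`. So `{F < s} = int G`, and its closure is `{F ≤ s}`.
-/

variable {E : Type*} [NormedAddCommGroup E] [NormedSpace ℝ E]

section Gauge

variable {K : Set E}

theorem gauge_le_iff_mem_smul (hKc : Convex ℝ K) (hKcl : IsClosed K) (hKb : IsBounded K)
    (hK0 : K ∈ 𝓝 0) {t : ℝ} (ht : 0 ≤ t) {u : E} : gauge K u ≤ t ↔ u ∈ t • K := by
  rcases ht.eq_or_lt with rfl | ht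
  · rw [zero_smul_set (nonempty_of_mem (mem_of_mem_nhds hK0)), Set.mem_zero,
      (gauge_nonneg u).ge_iff_eq',
      gauge_eq_zero (absorbent_nhds_zero hK0) ((NormedSpace.isVonNBounded_iff ℝ).2 hKb)]
  · have h := gauge_le_one_iff_mem_closure hKc hK0 (x := t⁻¹ • u)
    rw [hKcl.closure_eq, gauge_smul_of_nonneg (inv_nonneg.2 ht.le), smul_eq_mul,
      inv_mul_le_one₀ ht] at h
    rw [h, mem_smul_set_iff_inv_smul_mem₀ ht.ne']

theorem setOf_gauge_sub_le_eq_vadd (hKc : Convex ℝ K) (hKcl : IsClosed K) (hKb : IsBounded K)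
    (hK0 : K ∈ 𝓝 0) {t : ℝ} (ht : 0 ≤ t) (x : E) :
    {y | gauge K (y - x) ≤ t} = x +ᵥ t • K := by
  ext y
  rw [mem_ofPred_eq, gauge_le_iff_mem_smul hKc hKcl hKb hK0 ht, mem_vadd_set_iff_neg_vadd_mem,
    vadd_eq_add, neg_add_eq_sub]

theorem convexOn_comp_gauge_sub (hKc : Convex ℝ K) (hKa : Absorbent ℝ K) {φ : ℝ → ℝ}
    (hφ : Monotone φ) (hφc : ConvexOn ℝ (Ici 0) φ) (y : E) :
    ConvexOn ℝ univ fun x => φ (gauge K (y - x)) := by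
  refine ⟨convex_univ, fun x _ x' _ a b ha hb hab => ?_⟩
  have hsplit : y - (a • x + b • x') = a • (y - x) + b • (y - x') := by
    linear_combination (norm := module) (-hab) • y
  have hgauge : gauge K (y - (a • x + b • x')) ≤ a * gauge K (y - x) + b * gauge K (y - x') := by
    rw [hsplit]
    refine (gauge_add_le hKc hKa _ _).trans_eq ?_
    rw [gauge_smul_of_nonneg ha, gauge_smul_of_nonneg hb, smul_eq_mul, smul_eq_mul]
  exact (hφ hgauge).trans (hφc.2 (gauge_nonneg _) (gauge_nonneg _) ha hb hab)

theorem two_mul_comp_gauge_sub_le (hKc : Convex ℝ K) (hKa : Absorbent ℝ K) {φ : ℝ → ℝ}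
    (hφ : Monotone φ) (hφc : ConvexOn ℝ (Ici 0) φ) (x v y : E) :
    2 * φ (gauge K (y - x)) ≤ φ (gauge K (y - (x + v))) + φ (gauge K (y - (x - v))) := by
  have hmid := (convexOn_comp_gauge_sub hKc hKa hφ hφc y).2 (mem_univ (x + v))
    (mem_univ (x - v)) (by norm_num : (0 : ℝ) ≤ 1 / 2) (by norm_num : (0 : ℝ) ≤ 1 / 2)
    (by norm_num)
  rw [show (1 / 2 : ℝ) • (x + v) + (1 / 2 : ℝ) • (x - v) = x by module, smul_eq_mul,
    smul_eq_mul] at hmid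
  linarith

theorem eventually_two_mul_comp_gauge_sub_lt (hKc : Convex ℝ K) (hKb : IsBounded K)
    (hK0 : K ∈ 𝓝 0) {φ : ℝ → ℝ} (hφ : Monotone φ) (hφs : StrictMonoOn φ (Ici 0)) {v : E}
    (hv : v ≠ 0) (x : E) :
    ∀ᶠ y in 𝓝 x,
      2 * φ (gauge K (y - x)) < φ (gauge K (y - (x + v))) + φ (gauge K (y - (x - v))) := by
  have hpos : ∀ u : E, u ≠ 0 → 0 < gauge K u := fun u hu =>
    (gauge_pos (absorbent_nhds_zero hK0) ((NormedSpace.isVonNBounded_iff ℝ).2 hKb)).2 hu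
  have hcont : ∀ z, Continuous fun y => gauge K (y - z) := fun z =>
    (continuous_gauge hKc hK0).comp (continuous_sub_right z)
  obtain ⟨a, ha, hav⟩ := exists_between (lt_min (hpos (-v) (neg_ne_zero.2 hv)) (hpos v hv))
  rw [lt_min_iff] at hav
  have h₀ : ∀ᶠ y in 𝓝 x, gauge K (y - x) < a :=
    ((hcont x).tendsto x).eventually (eventually_lt_nhds (by simpa using ha))
  have h₁ : ∀ᶠ y in 𝓝 x, a < gauge K (y - (x + v)) :=
    ((hcont _).tendsto x).eventually (eventually_gt_nhds (by rw [sub_add_cancel_left]; exact hav.1))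
  have h₂ : ∀ᶠ y in 𝓝 x, a < gauge K (y - (x - v)) :=
    ((hcont _).tendsto x).eventually (eventually_gt_nhds (by rw [sub_sub_cancel]; exact hav.2))
  filter_upwards [h₀, h₁, h₂] with y hy₀ hy₁ hy₂
  linarith [hφ hy₀.le, hφs ha.le (gauge_nonneg _) hy₁, hφs ha.le (gauge_nonneg _) hy₂]

end Gauge

theorem IsPreconnected.subset_interior_of_disjoint_frontier {X : Type*} [TopologicalSpace X]
    {P s : Set X} (hP : IsPreconnected P) (hPs : Disjoint P (frontier s)) {x : X} (hxP : x ∈ P)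
    (hxs : x ∈ closure s) : P ⊆ interior s := by
  have hint : ∀ y ∈ P, y ∈ closure s → y ∈ interior s := fun y hyP hys =>
    (closure_eq_interior_union_frontier s ▸ hys).resolve_right (hPs.notMem_of_mem_left hyP)
  exact hP.subset_of_closure_inter_subset isOpen_interior ⟨x, hxP, hint x hxP hxs⟩
    fun y hy => hint y hy.2 (closure_mono interior_subset hy.1)

theorem exists_nonneg_add_smul_mem_frontier {s : Set E} (hs : IsBounded s) {x : E}
    (hx : x ∈ closure s) {e : E} (he : e ≠ 0) : ∃ t : ℝ, 0 ≤ t ∧ x + t • e ∈ frontier s := by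
  have hray : IsPreconnected ((fun t : ℝ => x + t • e) '' Ici 0) :=
    isPreconnected_Ici.image _ (by fun_prop : Continuous fun t : ℝ => x + t • e).continuousOn
  obtain ⟨C, hC⟩ := isBounded_iff_forall_norm_le.1 hs.closure
  have hex : ((fun t : ℝ => x + t • e) '' Ici 0 \ closure s).Nonempty := by
    have he' : 0 < ‖e‖ := norm_pos_iff.2 he
    have ht : 0 ≤ (C + ‖x‖ + 1) / ‖e‖ := div_nonneg (by linarith [hC x hx, norm_nonneg x]) he'.le
    refine ⟨_, mem_image_of_mem _ (mem_Ici.2 ht), fun hin => ?_⟩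
    have hnorm := norm_sub_le (x + ((C + ‖x‖ + 1) / ‖e‖) • e) x
    rw [add_sub_cancel_left, norm_smul, Real.norm_of_nonneg ht, div_mul_cancel₀ _ he'.ne'] at hnorm
    linarith [hC _ hin]
  by_contra! hfr
  obtain ⟨y, hyR, hy⟩ := hex
  refine hy (interior_subset_closure (hray.subset_interior_of_disjoint_frontier ?_
    ⟨0, mem_Ici.2 le_rfl, by simp⟩ hx hyR))
  rw [disjoint_left]
  rintro _ ⟨t, ht, rfl⟩
  exact hfr t ht

section SublevelSets

variable {X β : Type*} [TopologicalSpace X] [LinearOrder β] {F : X → β} {s : β} {G : Set X}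

def IsRegularSublevel (F : X → β) (s : β) (G : Set X) : Prop :=
  {x | F x < s} ⊆ G ∧ G ⊆ closure {x | F x < s} ∧ frontier G = frontier {x | F x < s} ∧
    frontier {x | F x < s} = {x | F x = s} ∩ closure {x | F x < s}

theorem isRegularSublevel_univ (h : ∀ x, F x < s) : IsRegularSublevel F s univ := by
  have hA : {x | F x < s} = univ := eq_univ_of_forall h
  have hlevel : {x | F x = s} = ∅ := eq_empty_of_forall_notMem fun x hx => (h x).ne hx
  simp [IsRegularSublevel, hA, hlevel]

theorem isRegularSublevel_of_interior_eq (hint : interior G = {x | F x < s})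
    (hcl : closure {x | F x < s} = {x | F x ≤ s}) (hG : G ⊆ {x | F x ≤ s}) :
    IsRegularSublevel F s G := by
  have hclG : closure G = {x | F x ≤ s} :=
    ((closure_mono interior_subset).trans' (hint ▸ hcl.ge)).antisymm'
      (closure_minimal hG (hcl ▸ isClosed_closure))
  have hfrA : frontier {x | F x < s} = {x | F x ≤ s} \ {x | F x < s} := by
    rw [frontier, hcl, ← hint, interior_interior]
  refine ⟨hint ▸ interior_subset, hcl ▸ hG, ?_, ?_⟩
  · rw [hfrA, frontier, hclG, hint]
  · ext x
    simp only [hfrA, hcl, Set.mem_sdiff, mem_inter_iff, mem_ofPred_eq, not_lt]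
    exact ⟨fun h => ⟨le_antisymm h.1 h.2, h.1⟩, fun h => ⟨h.2, h.1.ge⟩⟩

theorem lt_of_mem_interior_setOf_le {x : X} (hx : x ∈ interior {y | F y ≤ s})
    (hmax : ¬IsLocalMax F x) : F x < s :=
  lt_of_not_ge fun hsx => hmax <|
    mem_of_superset (isOpen_interior.mem_nhds hx) fun _ hy =>
      le_trans (interior_subset (s := {y | F y ≤ s}) hy) hsx

theorem interior_subset_setOf_lt [MeasurableSpace X] [OpensMeasurableSpace X] {ν : Measure X}
    [ν.IsOpenPosMeasure] (hGs : G ⊆ {x | F x ≤ s})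
    (hmax : ∀ x ∈ (ν.restrict G).support, ¬IsLocalMax F x) :
    interior G ⊆ {x | F x < s} := fun x hx =>
  lt_of_mem_interior_setOf_le (interior_mono hGs hx)
    (hmax x (Measure.interior_inter_support (mem_inter hx (by simp [Measure.support_eq_univ]))))

end SublevelSets

section ConvexSublevel

variable {F : E → ℝ} {G : Set E} {s : ℝ}

theorem ConvexOn.le_of_mem_closure [Nontrivial E] (hF : ConvexOn ℝ univ F) (hG : IsBounded G)
    (hs : ∀ x ∈ frontier G, F x ≤ s) {x : E} (hx : x ∈ closure G) : F x ≤ s := by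
  obtain ⟨e, he⟩ := exists_ne (0 : E)
  obtain ⟨a, ha, hza⟩ := exists_nonneg_add_smul_mem_frontier hG hx he
  obtain ⟨b, hb, hzb⟩ := exists_nonneg_add_smul_mem_frontier hG hx (neg_ne_zero.2 he)
  have hseg : x ∈ segment ℝ (x + a • e) (x + b • -e) := by
    rw [mem_segment_iff_sameRay, add_sub_cancel_left, sub_add_cancel_left, ← smul_neg]
    exact ((SameRay.refl (R := ℝ) (-e)).nonneg_smul_left ha).nonneg_smul_right hb
  exact (hF.le_max_of_mem_segment (mem_univ _) (mem_univ _) hseg).trans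
    (max_le (hs _ hza) (hs _ hzb))

theorem ConvexOn.closure_setOf_lt (hF : ConvexOn ℝ univ F) (hFc : Continuous F) {a : E}
    (ha : F a < s) : closure {x | F x < s} = {x | F x ≤ s} := by
  refine (closure_lt_subset_le hFc continuous_const).antisymm fun x hx => ?_
  have hseg : openSegment ℝ a x ⊆ {x | F x < s} := by
    rintro _ ⟨p, q, hp, hq, hpq, rfl⟩
    have := hF.2 (mem_univ a) (mem_univ x) hp.le hq.le hpq
    simp only [smul_eq_mul] at this
    have hs : p * s + q * s = s := by rw [← add_mul, hpq, one_mul]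
    show F (p • a + q • x) < s
    linarith [mul_lt_mul_of_pos_left ha hp, mul_le_mul_of_nonneg_left (hx : F x ≤ s) hq.le]
  exact closure_mono hseg (segment_subset_closure_openSegment (right_mem_segment ℝ a x))

theorem ConvexOn.setOf_lt_subset_interior (hF : ConvexOn ℝ univ F)
    (hs : ∀ x ∈ frontier G, F x = s) {x₀ : E} (hx₀ : x₀ ∈ closure G) (hx₀s : F x₀ < s) :
    {x | F x < s} ⊆ interior G := by
  have hconv : Convex ℝ {x | F x < s} := by simpa using hF.convex_lt s
  refine hconv.isPreconnected.subset_interior_of_disjoint_frontier ?_ hx₀s hx₀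
  exact disjoint_left.2 fun x hxs hx => hxs.ne (hs x hx)

variable [FiniteDimensional ℝ E] [MeasurableSpace E] [BorelSpace E] {ν : Measure E}
  [ν.IsAddHaarMeasure]

theorem Convex.nonempty_interior_inter_support_restrict {M : Set E} (hM : Convex ℝ M)
    (hGM : G ⊆ M) (hG : ν G ≠ 0) : (interior M ∩ (ν.restrict G).support).Nonempty := by
  refine Measure.nonempty_inter_support_of_pos ?_
  have hnull : ν (G \ interior M) = 0 :=
    measure_mono_null (sdiff_subset_sdiff_left (hGM.trans subset_closure)) (hM.addHaar_frontier ν)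
  rw [← measure_inter_add_sdiff G isOpen_interior.measurableSet, hnull, add_zero] at hG
  rw [Measure.restrict_apply isOpen_interior.measurableSet, inter_comm]
  exact pos_iff_ne_zero.2 hG

theorem ConvexOn.exists_mem_closure_lt (hF : ConvexOn ℝ univ F) (hGs : G ⊆ {x | F x ≤ s})
    (hG : ν G ≠ 0) (hmax : ∀ x ∈ (ν.restrict G).support, ¬IsLocalMax F x) :
    ∃ x ∈ closure G, F x < s := by
  have hconv : Convex ℝ {x | F x ≤ s} := by simpa using hF.convex_le s
  obtain ⟨x, hxs, hxG⟩ := hconv.nonempty_interior_inter_support_restrict hGs hG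
  exact ⟨x, (Measure.support_restrict_subset hxG).1, lt_of_mem_interior_setOf_le hxs (hmax x hxG)⟩

theorem ConvexOn.isRegularSublevel [Nontrivial E] (hF : ConvexOn ℝ univ F) (hG : IsBounded G)
    (hGν : ν G ≠ 0) (hs : ∀ x ∈ frontier G, F x = s)
    (hmax : ∀ x ∈ (ν.restrict G).support, ¬IsLocalMax F x) : IsRegularSublevel F s G := by
  have hGs : G ⊆ {x | F x ≤ s} := fun x hx =>
    hF.le_of_mem_closure hG (fun y hy => (hs y hy).le) (subset_closure hx)
  obtain ⟨x₀, hx₀G, hx₀s⟩ := hF.exists_mem_closure_lt hGs hGν hmax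
  exact isRegularSublevel_of_interior_eq
    ((interior_subset_setOf_lt hGs hmax).antisymm (hF.setOf_lt_subset_interior hs hx₀G hx₀s))
    (hF.closure_setOf_lt hF.locallyLipschitz.continuous hx₀s) hGs

end ConvexSublevel

theorem lintegral_measure_Iio_comp {α : Type*} [MeasurableSpace α] (ν : Measure α)
    (μ : Measure ℝ) [SFinite ν] [SFinite μ] {f : α → ℝ} (hf : Measurable f) :
    ∫⁻ y, μ (Iio (f y)) ∂ν = ∫⁻ t, ν {y | t < f y} ∂μ := by
  have hS : MeasurableSet {p : α × ℝ | p.2 < f p.1} :=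
    measurableSet_lt measurable_snd (hf.comp measurable_fst)
  exact (Measure.prod_apply hS).symm.trans (Measure.prod_apply_symm hS)

theorem monotone_toReal_measure_Ico (μ : Measure ℝ) [IsLocallyFiniteMeasure μ] :
    Monotone fun t => (μ (Ico 0 t)).toReal := fun _ _ h =>
  ENNReal.toReal_mono measure_Ico_lt_top.ne (measure_mono (Ico_subset_Ico_right h))

section GaugePotential

variable [MeasurableSpace E] {ν : Measure E} {K G : Set E} {φ : ℝ → ℝ}

/-- The function `f^φ` of the statement, with Lebesgue measure replaced by `ν`. -/
noncomputable def gaugePotential (ν : Measure E) (K G : Set E) (φ : ℝ → ℝ) (x : E) : ℝ :=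
  ∫ y in G, φ (gauge K (y - x)) ∂ν

theorem gaugePotential_nonneg (hφ : ∀ t, 0 ≤ φ t) (x : E) : 0 ≤ gaugePotential ν K G φ x :=
  integral_nonneg fun _ => hφ _

variable [BorelSpace E]

theorem gaugePotential_eq_toReal_lintegral [SFinite ν] {μ : Measure ℝ} [IsLocallyFiniteMeasure μ]
    (hKc : Convex ℝ K) (hKcl : IsClosed K) (hKb : IsBounded K) (hK0 : K ∈ 𝓝 0)
    (hφ : ∀ t, φ t = (μ (Ico 0 t)).toReal) (x : E) :
    gaugePotential ν K G φ x = (∫⁻ t in Ici 0, ν (G \ (x +ᵥ t • K)) ∂μ).toReal := by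
  have hg : Measurable fun y => gauge K (y - x) :=
    ((continuous_gauge hKc hK0).comp (continuous_sub_right x)).measurable
  have hIco : ∀ t, μ (Ico 0 t) = μ.restrict (Ici 0) (Iio t) := fun t => by
    rw [Measure.restrict_apply measurableSet_Iio, Iio_inter_Ici]
  have hmono : Monotone fun t => μ.restrict (Ici 0) (Iio t) := fun _ _ h =>
    measure_mono (Iio_subset_Iio h)
  calc gaugePotential ν K G φ x
      = ∫ y in G, (μ.restrict (Ici 0) (Iio (gauge K (y - x)))).toReal ∂ν := by
        simp only [gaugePotential, hφ, hIco]
    _ = (∫⁻ y in G, μ.restrict (Ici 0) (Iio (gauge K (y - x))) ∂ν).toReal :=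
        integral_toReal (hmono.measurable.comp hg).aemeasurable
          (ae_of_all _ fun _ => hIco _ ▸ measure_Ico_lt_top)
    _ = (∫⁻ t in Ici 0, ν (G \ (x +ᵥ t • K)) ∂μ).toReal := by
        rw [lintegral_measure_Iio_comp _ _ hg]
        refine congr_arg _ (setLIntegral_congr_fun measurableSet_Ici fun t ht => ?_)
        have hS : {y | t < gauge K (y - x)} = (x +ᵥ t • K)ᶜ := by
          rw [← setOf_gauge_sub_le_eq_vadd hKc hKcl hKb hK0 ht]
          ext; simp
        rw [Measure.restrict_apply (measurableSet_lt measurable_const hg), hS, inter_comm,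
          ← sdiff_eq]

theorem gaugePotential_eq_of_measure_inter_vadd_eq [SFinite ν] [NullSingletonClass ν]
    {μ : Measure ℝ} [IsLocallyFiniteMeasure μ]
    (hKc : Convex ℝ K) (hKcl : IsClosed K) (hKb : IsBounded K) (hK0 : K ∈ 𝓝 0)
    (hφ : ∀ t, φ t = (μ (Ico 0 t)).toReal) (hG : ν G ≠ ∞) {x x' : E}
    (h : ∀ r : ℝ, 0 < r → ν (G ∩ (x +ᵥ r • K)) = ν (G ∩ (x' +ᵥ r • K))) :
    gaugePotential ν K G φ x = gaugePotential ν K G φ x' := by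
  rw [gaugePotential_eq_toReal_lintegral hKc hKcl hKb hK0 hφ,
    gaugePotential_eq_toReal_lintegral hKc hKcl hKb hK0 hφ]
  refine congr_arg _ (setLIntegral_congr_fun measurableSet_Ici fun t ht => ?_)
  have hmeas : ∀ z : E, MeasurableSet (z +ᵥ t • K) := fun z => by
    rw [← setOf_gauge_sub_le_eq_vadd hKc hKcl hKb hK0 ht]
    exact measurableSet_le
      ((continuous_gauge hKc hK0).comp (continuous_sub_right z)).measurable measurable_const
  have hinter : ν (G ∩ (x +ᵥ t • K)) = ν (G ∩ (x' +ᵥ t • K)) := by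
    rcases (mem_Ici.1 ht).eq_or_lt with rfl | ht
    · have hzero : ∀ z : E, ν (G ∩ (z +ᵥ (0 : ℝ) • K)) = 0 := fun z =>
        measure_mono_null (inter_subset_right.trans (by
          simp [zero_smul_set (nonempty_of_mem (mem_of_mem_nhds hK0)), ← singleton_zero]))
          (measure_singleton z)
      rw [hzero, hzero]
    · exact h t ht
  have hfin : ν (G ∩ (x +ᵥ t • K)) ≠ ∞ := ne_top_of_le_ne_top hG (measure_mono inter_subset_left)
  have hsum := measure_inter_add_sdiff (μ := ν) G (hmeas x)
  rw [← measure_inter_add_sdiff (μ := ν) G (hmeas x'), hinter] at hsum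
  exact (ENNReal.add_right_inj (hinter ▸ hfin)).1 hsum

variable [ProperSpace E] [IsFiniteMeasureOnCompacts ν]

theorem integrableOn_comp_gauge_sub (hKc : Convex ℝ K) (hK0 : K ∈ 𝓝 0) (hφ : Monotone φ)
    (hG : IsBounded G) (x : E) : IntegrableOn (fun y => φ (gauge K (y - x))) G ν := by
  have hg : Continuous fun y => gauge K (y - x) :=
    (continuous_gauge hKc hK0).comp (continuous_sub_right x)
  obtain ⟨M, hM⟩ := hG.isCompact_closure.bddAbove_image hg.continuousOn
  refine (Measure.integrableOn_of_bounded (M := max |φ 0| |φ M|)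
    hG.isCompact_closure.measure_lt_top.ne (hφ.measurable.comp hg.measurable).aestronglyMeasurable
    ?_).mono_set subset_closure
  refine (ae_restrict_iff' isClosed_closure.measurableSet).2 (ae_of_all _ fun y hy => ?_)
  exact abs_le_max_abs_abs (hφ (gauge_nonneg _)) (hφ (hM (mem_image_of_mem _ hy)))

theorem convexOn_gaugePotential (hKc : Convex ℝ K) (hK0 : K ∈ 𝓝 0) (hφ : Monotone φ)
    (hφc : ConvexOn ℝ (Ici 0) φ) (hG : IsBounded G) :
    ConvexOn ℝ univ (gaugePotential ν K G φ) := by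
  refine ⟨convex_univ, fun x _ x' _ a b ha hb hab => ?_⟩
  have hint := integrableOn_comp_gauge_sub (ν := ν) hKc hK0 hφ hG
  have hpt := fun y => (convexOn_comp_gauge_sub hKc (absorbent_nhds_zero hK0) hφ hφc y).2
    (mem_univ x) (mem_univ x') ha hb hab
  calc gaugePotential ν K G φ (a • x + b • x')
      ≤ ∫ y in G, (a * φ (gauge K (y - x)) + b * φ (gauge K (y - x'))) ∂ν :=
        integral_mono (hint _) (((hint x).const_mul a).add ((hint x').const_mul b)) hpt
    _ = a • gaugePotential ν K G φ x + b • gaugePotential ν K G φ x' := by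
        rw [integral_add ((hint x).const_mul a) ((hint x').const_mul b), integral_const_mul,
          integral_const_mul]
        rfl

theorem gaugePotential_two_mul_lt (hKc : Convex ℝ K) (hKb : IsBounded K) (hK0 : K ∈ 𝓝 0)
    (hφ : Monotone φ) (hφc : ConvexOn ℝ (Ici 0) φ) (hφs : StrictMonoOn φ (Ici 0))
    (hG : IsBounded G) {x v : E} (hx : x ∈ (ν.restrict G).support) (hv : v ≠ 0) :
    2 * gaugePotential ν K G φ x <
      gaugePotential ν K G φ (x + v) + gaugePotential ν K G φ (x - v) := by
  set h : E → ℝ := fun y =>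
    φ (gauge K (y - (x + v))) + φ (gauge K (y - (x - v))) - 2 * φ (gauge K (y - x)) with h_def
  have hint := integrableOn_comp_gauge_sub (ν := ν) hKc hK0 hφ hG
  have hsum : Integrable (fun y => φ (gauge K (y - (x + v))) + φ (gauge K (y - (x - v))))
      (ν.restrict G) := (hint _).add (hint _)
  have h_int : Integrable h (ν.restrict G) := hsum.sub ((hint x).const_mul 2)
  have h_eq : ∫ y, h y ∂(ν.restrict G) = gaugePotential ν K G φ (x + v) +
      gaugePotential ν K G φ (x - v) - 2 * gaugePotential ν K G φ x := by
    rw [h_def, integral_sub hsum ((hint x).const_mul 2), integral_add (hint _) (hint _),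
      integral_const_mul]
    rfl
  have h_nonneg : 0 ≤ h := fun y => sub_nonneg.2
    (two_mul_comp_gauge_sub_le hKc (absorbent_nhds_zero hK0) hφ hφc x v y)
  have h_supp : Function.support h ∈ 𝓝 x :=
    (eventually_two_mul_comp_gauge_sub_lt hKc hKb hK0 hφ hφs hv x).mono fun _ hy =>
      (sub_pos.2 hy).ne'
  have h_int_pos : 0 < ∫ y, h y ∂(ν.restrict G) :=
    (integral_pos_iff_support_of_nonneg h_nonneg h_int).2
      ((Measure.mem_support_iff_forall x).1 hx _ h_supp)
  linarith

theorem not_isLocalMax_gaugePotential [Nontrivial E] (hKc : Convex ℝ K) (hKb : IsBounded K)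
    (hK0 : K ∈ 𝓝 0) (hφ : Monotone φ) (hφc : ConvexOn ℝ (Ici 0) φ)
    (hφs : StrictMonoOn φ (Ici 0)) (hG : IsBounded G) {x : E}
    (hx : x ∈ (ν.restrict G).support) : ¬IsLocalMax (gaugePotential ν K G φ) x := by
  intro hmax
  obtain ⟨e, he⟩ := exists_ne (0 : E)
  have hline : ∀ c : ℝ, ∀ᶠ t in 𝓝 (0 : ℝ),
      gaugePotential ν K G φ (x + (c * t) • e) ≤ gaugePotential ν K G φ x := fun c =>
    ((by fun_prop : Continuous fun t : ℝ => x + (c * t) • e).tendsto' 0 x (by simp)).eventually hmax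
  obtain ⟨t, ⟨h₁, h₂⟩, ht⟩ :=
    (((hline 1).and (hline (-1))).filter_mono nhdsWithin_le_nhds |>.and
      (self_mem_nhdsWithin : {t : ℝ | t ≠ 0} ∈ 𝓝[≠] 0)).exists
  have hlt := gaugePotential_two_mul_lt hKc hKb hK0 hφ hφc hφs hG hx (smul_ne_zero ht he)
  rw [sub_eq_add_neg, ← neg_smul, ← neg_one_mul] at hlt
  rw [one_mul] at h₁
  linarith

end GaugePotential

theorem K_dense_sublevel_set_general
    (N : ℕ) (K G : Set (EuclideanSpace ℝ (Fin N)))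
    (hK_conv : Convex ℝ K) (hK_comp : IsCompact K)
    (hK0 : (0 : EuclideanSpace ℝ (Fin N)) ∈ interior K)
    (hG_bdd : Bornology.IsBounded G)
    (hG_pos : 0 < volume G)
    (hdense : ∀ r : ℝ, 0 < r → ∀ x ∈ frontier G, ∀ y ∈ frontier G,
      volume (G ∩ (x +ᵥ r • K)) = volume (G ∩ (y +ᵥ r • K)))
    (μ : Measure ℝ) (hμ : IsLocallyFiniteMeasure μ)
    (φ : ℝ → ℝ) (hφ_def : ∀ t, φ t = (μ (Set.Ico 0 t)).toReal)
    (hφ_conv : ConvexOn ℝ (Set.Ici (0 : ℝ)) φ)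
    (hφ_mono : StrictMonoOn φ (Set.Ici (0 : ℝ))) :
    ∃ s : ℝ, 0 < s ∧
      (({x | (∫ y in G, φ (gauge K (y - x))) < s} : Set (EuclideanSpace ℝ (Fin N))) ⊆ G) ∧
      G ⊆ closure {x | (∫ y in G, φ (gauge K (y - x))) < s} ∧
      frontier G = frontier {x | (∫ y in G, φ (gauge K (y - x))) < s} ∧
      frontier {x | (∫ y in G, φ (gauge K (y - x))) < s} =
        {x | (∫ y in G, φ (gauge K (y - x))) = s} ∩
          closure {x | (∫ y in G, φ (gauge K (y - x))) < s} := by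
  show ∃ s : ℝ, 0 < s ∧ IsRegularSublevel (gaugePotential volume K G φ) s G
  set F := gaugePotential volume K G φ
  have hK : K ∈ 𝓝 0 := mem_interior_iff_mem_nhds.1 hK0
  have hφ : Monotone φ := (funext hφ_def).symm ▸ monotone_toReal_measure_Ico μ
  have hF_nonneg : ∀ x, 0 ≤ F x :=
    gaugePotential_nonneg fun t => hφ_def t ▸ ENNReal.toReal_nonneg
  have hF : ConvexOn ℝ univ F := convexOn_gaugePotential hK_conv hK hφ hφ_conv hG_bdd
  have hGne : G.Nonempty := nonempty_of_measure_ne_zero hG_pos.ne'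
  rcases subsingleton_or_nontrivial (EuclideanSpace ℝ (Fin N)) with hE | hE
  · refine ⟨F 0 + 1, by linarith [hF_nonneg 0], hGne.eq_univ ▸ isRegularSublevel_univ fun x => ?_⟩
    rw [Subsingleton.elim x 0]
    linarith
  obtain ⟨z, hz⟩ := nonempty_frontier_iff.2
    ⟨hGne, fun h => NormedSpace.unbounded_univ ℝ _ (h ▸ hG_bdd)⟩
  have hreg := hF.isRegularSublevel hG_bdd hG_pos.ne'
    (fun x hx => gaugePotential_eq_of_measure_inter_vadd_eq hK_conv hK_comp.isClosed
      hK_comp.isBounded hK hφ_def hG_bdd.measure_lt_top.ne fun r hr => hdense r hr x hx z hz)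
    (fun x hx => not_isLocalMax_gaugePotential hK_conv hK_comp.isBounded hK hφ hφ_conv hφ_mono
      hG_bdd hx)
  obtain ⟨a, ha⟩ := closure_nonempty_iff.1 (hGne.mono hreg.2.1)
  exact ⟨_, (hF_nonneg a).trans_lt ha, hreg⟩

/-- **Theorem 2.3 (second part): `G` is a regular sublevel set of `f^φ`.** Let `K ⊂ ℝ^N` be a
convex body containing the origin in its interior, `G ⊂ ℝ^N` a bounded measurable set of
positive Lebesgue measure which is uniformly `K`-dense, and `φ(t) = μ([0,t))` for a locally
finite Borel measure `μ`, with `φ` convex and strictly increasing on `[0,∞)`.  Then there is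
`s > 0` such that the open sublevel set `A = {f^φ < s}` satisfies `A ⊆ G ⊆ Ā`,
`∂G = ∂A`, and `∂A = {f^φ = s} ∩ Ā`. -/
theorem K_dense_sublevel_set
    (N : ℕ) (K G : Set (EuclideanSpace ℝ (Fin N)))
    (hK_conv : Convex ℝ K) (hK_comp : IsCompact K)
    (hK0 : (0 : EuclideanSpace ℝ (Fin N)) ∈ interior K)
    (hG_meas : MeasurableSet G) (hG_bdd : Bornology.IsBounded G)
    (hG_pos : 0 < volume G)
    (hdense : ∀ r : ℝ, 0 < r → ∀ x ∈ frontier G, ∀ y ∈ frontier G,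
      volume (G ∩ (x +ᵥ r • K)) = volume (G ∩ (y +ᵥ r • K)))
    (μ : Measure ℝ) (hμ : IsLocallyFiniteMeasure μ)
    (φ : ℝ → ℝ) (hφ_def : ∀ t, φ t = (μ (Set.Ico 0 t)).toReal)
    (hφ_conv : ConvexOn ℝ (Set.Ici (0 : ℝ)) φ)
    (hφ_mono : StrictMonoOn φ (Set.Ici (0 : ℝ))) :
    ∃ s : ℝ, 0 < s ∧
      (({x | (∫ y in G, φ (gauge K (y - x))) < s} : Set (EuclideanSpace ℝ (Fin N))) ⊆ G) ∧
      G ⊆ closure {x | (∫ y in G, φ (gauge K (y - x))) < s} ∧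
      frontier G = frontier {x | (∫ y in G, φ (gauge K (y - x))) < s} ∧
      frontier {x | (∫ y in G, φ (gauge K (y - x))) < s} =
        {x | (∫ y in G, φ (gauge K (y - x))) = s} ∩
          closure {x | (∫ y in G, φ (gauge K (y - x))) < s} :=
  K_dense_sublevel_set_general N K G hK_conv hK_comp hK0 hG_bdd hG_pos hdense μ hμ φ hφ_def hφ_conv
    hφ_mono
end

section
/- Let K ⊂ ℝ^N be a convex body containing the origin in its interior and let G ⊂ ℝ^N be a bounded measurable set with positive Lebesgue measure which is uniformly K-dense. Then the function x ↦ max_{y ∈ Ḡ} ‖y − x‖_K is constant for x ranging over ∂G. -/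
/-!
Let `S` be the support of Lebesgue measure restricted to `G`; it contains `interior G` and is
contained in `closure G`. If `S` missed `∂G`, then `S = interior G` would be clopen, which is
impossible in the connected space `ℝ^N`. The translates `x + rK`, `r > 0`, form a neighbourhood
basis at `x`, so uniform `K`-density carries this one boundary point of `S` to all of `∂G`, and
`S = closure G`. Now let `x, x' ∈ ∂G` and `r > max_{y ∈ Ḡ} ‖y - x‖_K`. Then `G ⊆ x + rK`, so by
density `G \ (x' + rK)` is null; since every point of `Ḡ` lies in `S`, all of `Ḡ` lies in
`x' + rK`, i.e. `max_{y ∈ Ḡ} ‖y - x'‖_K ≤ r`.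
-/

open MeasureTheory Set Pointwise Filter Topology
open scoped ENNReal

section Topological

variable {X : Type*} [TopologicalSpace X] [MeasurableSpace X] [OpensMeasurableSpace X]
  {μ : Measure X} [μ.IsOpenPosMeasure] {G : Set X}

theorem interior_subset_support_restrict : interior G ⊆ (μ.restrict G).support := fun x hx =>
  Measure.interior_inter_support ⟨hx, (Measure.support_eq_univ (μ := μ)).symm ▸ mem_univ x⟩

theorem closure_subset_support_restrict (h : frontier G ⊆ (μ.restrict G).support) :
    closure G ⊆ (μ.restrict G).support := by
  rw [closure_eq_interior_union_frontier]
  exact union_subset interior_subset_support_restrict h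

theorem frontier_inter_support_restrict_nonempty [PreconnectedSpace X]
    [HereditarilyLindelofSpace X] (hG : μ G ≠ 0) (hfr : (frontier G).Nonempty) :
    (frontier G ∩ (μ.restrict G).support).Nonempty := by
  by_contra h
  have hsupp : (μ.restrict G).support = interior G := by
    refine subset_antisymm (fun y hy => ?_) interior_subset_support_restrict
    have hy_cl : y ∈ closure G := (Measure.support_restrict_subset hy).1
    by_contra hy_int
    exact h ⟨y, ⟨hy_cl, hy_int⟩, hy⟩
  have hclopen : IsClopen (interior G) :=
    ⟨hsupp ▸ Measure.isClosed_support, isOpen_interior⟩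
  rcases isClopen_iff.mp hclopen with hempty | huniv
  · rw [← hsupp, Measure.support_eq_empty_iff, Measure.restrict_eq_zero] at hempty
    exact hG hempty
  · rw [frontier, huniv, sdiff_univ] at hfr
    exact hfr.ne_empty rfl

end Topological

section TopologicalVectorSpace

variable {E : Type*} [AddCommGroup E] [TopologicalSpace E] [Module ℝ E] [ContinuousSMul ℝ E]
  {K : Set E}

theorem hasBasis_nhds_vadd_smul [IsTopologicalAddGroup E] (hKb : Bornology.IsVonNBounded ℝ K)
    (hK0 : K ∈ 𝓝 0) (x : E) :
    (𝓝 x).HasBasis (fun r : ℝ => 0 < r) (fun r => x +ᵥ r • K) := by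
  have hbasis : (𝓝 (0 : E)).HasBasis (fun r : ℝ => 0 < r) (· • K) := by
    refine (𝓝 (0 : E)).basis_sets.to_hasBasis' (fun U hU => ?_)
      (fun r hr => (set_smul_mem_nhds_zero_iff hr.ne').mpr hK0)
    have hsmall : ∀ᶠ r in 𝓝[>] (0 : ℝ), r • K ⊆ U :=
      nhdsWithin_le_nhds <|
        hKb.tendsto_smallSets_nhds.eventually (eventually_smallSets_subset.mpr hU)
    exact (hsmall.and self_mem_nhdsWithin).exists.imp fun r hr => ⟨hr.2, hr.1⟩
  rw [← map_add_left_nhds_zero x]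
  exact hbasis.map (x + ·)

theorem subset_vadd_smul_of_gauge_sub_le (hK : Convex ℝ K) (hK0 : K ∈ 𝓝 0) {s : Set E} {x : E}
    {M r : ℝ} (hM : 0 ≤ M) (hMr : M < r) (h : ∀ y ∈ s, gauge K (y - x) ≤ M) :
    s ⊆ x +ᵥ r • K := by
  intro y hy
  have hmem : y - x ∈ {z | gauge K z ≤ M} := h y hy
  rw [setOfPred_gauge_le_eq hK (mem_of_mem_nhds hK0) (absorbent_nhds_zero hK0) hM] at hmem
  rw [mem_vadd_set_iff_neg_vadd_mem, vadd_eq_add, neg_add_eq_sub]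
  exact mem_iInter₂.mp hmem r hMr

variable [IsTopologicalAddGroup E] [MeasurableSpace E] [OpensMeasurableSpace E] {μ : Measure E}
  {G : Set E}

def IsUniformlyDense (μ : Measure E) (K G : Set E) : Prop :=
  ∀ r : ℝ, 0 < r → ∀ x ∈ frontier G, ∀ y ∈ frontier G,
    μ (G ∩ (x +ᵥ r • K)) = μ (G ∩ (y +ᵥ r • K))

theorem IsClosed.measurableSet_vadd_smul (hKc : IsClosed K) (x : E) {r : ℝ} (hr : r ≠ 0) :
    MeasurableSet (x +ᵥ r • K) :=
  ((hKc.smul_of_ne_zero hr).vadd x).measurableSet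

theorem gauge_sub_le_of_measure_diff_eq_zero (hK : Convex ℝ K) (hK0 : K ∈ 𝓝 0) {x y : E} {r : ℝ}
    (hr : 0 ≤ r) (h : μ (G \ (x +ᵥ r • K)) = 0) (hy : y ∈ (μ.restrict G).support) :
    gauge K (y - x) ≤ r := by
  by_contra! hlt
  set U := {z | r < gauge K (z - x)}
  have hU : IsOpen U :=
    isOpen_lt continuous_const ((continuous_gauge hK hK0).comp (continuous_sub_right x))
  have hpos := (Measure.mem_support_iff_forall y).mp hy U (hU.mem_nhds hlt)
  rw [Measure.restrict_apply hU.measurableSet] at hpos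
  have hsub : U ∩ G ⊆ G \ (x +ᵥ r • K) := by
    rintro z ⟨hzU, hzG⟩
    refine ⟨hzG, fun hzK => ?_⟩
    rw [mem_vadd_set_iff_neg_vadd_mem, vadd_eq_add, neg_add_eq_sub] at hzK
    exact (gauge_le_of_mem hr hzK).not_gt hzU
  exact hpos.ne' (measure_mono_null hsub h)

theorem IsUniformlyDense.frontier_subset_support_restrict (hd : IsUniformlyDense μ K G)
    (hKb : Bornology.IsVonNBounded ℝ K) (hK0 : K ∈ 𝓝 0) (hKc : IsClosed K) {q : E}
    (hq : q ∈ frontier G ∩ (μ.restrict G).support) : frontier G ⊆ (μ.restrict G).support := by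
  have hrestrict : ∀ x, ∀ r : ℝ, 0 < r → μ.restrict G (x +ᵥ r • K) = μ (G ∩ (x +ᵥ r • K)) :=
    fun x r hr => by rw [Measure.restrict_apply (hKc.measurableSet_vadd_smul x hr.ne'), inter_comm]
  intro z hz
  rw [(hasBasis_nhds_vadd_smul hKb hK0 z).mem_measureSupport]
  intro r hr
  rw [hrestrict z r hr, ← hd r hr q hq.1 z hz, ← hrestrict q r hr]
  exact (hasBasis_nhds_vadd_smul hKb hK0 q).mem_measureSupport.mp hq.2 r hr

theorem IsUniformlyDense.sSup_gauge_sub_le (hd : IsUniformlyDense μ K G) (hK : Convex ℝ K)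
    (hK0 : K ∈ 𝓝 0) (hKc : IsClosed K) (hG : μ G ≠ ∞) (hcomp : IsCompact (closure G))
    (hsupp : closure G ⊆ (μ.restrict G).support) {x x' : E} (hx : x ∈ frontier G)
    (hx' : x' ∈ frontier G) :
    sSup ((fun y => gauge K (y - x')) '' closure G) ≤
      sSup ((fun y => gauge K (y - x)) '' closure G) := by
  have hbdd : BddAbove ((fun y => gauge K (y - x)) '' closure G) :=
    (hcomp.image ((continuous_gauge hK hK0).comp (continuous_sub_right x))).bddAbove
  set M := sSup ((fun y => gauge K (y - x)) '' closure G)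
  have hM : 0 ≤ M := (gauge_nonneg _).trans (le_csSup hbdd ⟨x, hx.1, rfl⟩)
  refine le_of_forall_gt_imp_ge_of_dense fun r hr => ?_
  have hr0 : 0 < r := hM.trans_lt hr
  have hGx : G ⊆ x +ᵥ r • K := subset_vadd_smul_of_gauge_sub_le hK hK0 hM hr
    fun y hy => le_csSup hbdd ⟨y, subset_closure hy, rfl⟩
  have hnull : μ (G \ (x' +ᵥ r • K)) = 0 := by
    have hsplit := measure_inter_add_sdiff (μ := μ) G (hKc.measurableSet_vadd_smul x' hr0.ne')
    rw [← hd r hr0 x hx x' hx', inter_eq_left.mpr hGx] at hsplit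
    exact (ENNReal.add_right_inj hG).mp (hsplit.trans (add_zero _).symm)
  exact csSup_le ((nonempty_of_mem hx'.1).image _) fun _ ⟨y, hy, hxy⟩ =>
    hxy ▸ gauge_sub_le_of_measure_diff_eq_zero hK hK0 hr0.le hnull (hsupp hy)

end TopologicalVectorSpace

theorem K_dense_max_gauge_constant_general
    (N : ℕ) (K G : Set (EuclideanSpace ℝ (Fin N)))
    (hK_conv : Convex ℝ K) (hK_comp : IsCompact K)
    (hK0 : (0 : EuclideanSpace ℝ (Fin N)) ∈ interior K)
    (hG_bdd : Bornology.IsBounded G)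
    (hG_pos : 0 < volume G)
    (hdense : ∀ r : ℝ, 0 < r → ∀ x ∈ frontier G, ∀ y ∈ frontier G,
      volume (G ∩ (x +ᵥ r • K)) = volume (G ∩ (y +ᵥ r • K))) :
    ∀ x ∈ frontier G, ∀ x' ∈ frontier G,
      sSup ((fun y => gauge K (y - x)) '' closure G) =
        sSup ((fun y => gauge K (y - x')) '' closure G) := by
  intro x hx x' hx'
  have hdense' : IsUniformlyDense volume K G := hdense
  have hK0' : K ∈ 𝓝 0 := mem_interior_iff_mem_nhds.mp hK0
  obtain ⟨q, hq⟩ := frontier_inter_support_restrict_nonempty hG_pos.ne' ⟨x, hx⟩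
  have hsupp : closure G ⊆ (volume.restrict G).support := closure_subset_support_restrict <|
    hdense'.frontier_subset_support_restrict (hK_comp.isVonNBounded ℝ) hK0' hK_comp.isClosed hq
  have hG_fin : volume G ≠ ∞ := hG_bdd.measure_lt_top.ne
  have hcomp : IsCompact (closure G) := hG_bdd.isCompact_closure
  exact le_antisymm
    (hdense'.sSup_gauge_sub_le hK_conv hK0' hK_comp.isClosed hG_fin hcomp hsupp hx' hx)
    (hdense'.sSup_gauge_sub_le hK_conv hK0' hK_comp.isClosed hG_fin hcomp hsupp hx hx')

/-- **Corollary 2.4.** If `K ⊂ ℝ^N` is a convex body containing the origin in its interior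
and `G ⊂ ℝ^N` is a bounded measurable set of positive Lebesgue measure which is uniformly
`K`-dense, then the function `x ↦ max_{y ∈ Ḡ} ‖y - x‖_K` is constant on `∂G`. -/
theorem K_dense_max_gauge_constant
    (N : ℕ) (K G : Set (EuclideanSpace ℝ (Fin N)))
    (hK_conv : Convex ℝ K) (hK_comp : IsCompact K)
    (hK0 : (0 : EuclideanSpace ℝ (Fin N)) ∈ interior K)
    (hG_meas : MeasurableSet G) (hG_bdd : Bornology.IsBounded G)
    (hG_pos : 0 < volume G)
    (hdense : ∀ r : ℝ, 0 < r → ∀ x ∈ frontier G, ∀ y ∈ frontier G,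
      volume (G ∩ (x +ᵥ r • K)) = volume (G ∩ (y +ᵥ r • K))) :
    ∀ x ∈ frontier G, ∀ x' ∈ frontier G,
      sSup ((fun y => gauge K (y - x)) '' closure G) =
        sSup ((fun y => gauge K (y - x')) '' closure G) :=
  K_dense_max_gauge_constant_general N K G hK_conv hK_comp hK0 hG_bdd hG_pos hdense
end

section
/- Let K ⊂ ℝ^N be a convex body containing the origin in its interior and let G ⊂ ℝ^N be a bounded convex body. Then the function f(x) = ∫_G ‖y − x‖_K dy is differentiable at every point of ℝ^N and its gradient ∇f is Lipschitz continuous on ℝ^N. -/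
/-!
The gauge `g = gauge K` is Lipschitz, so by Rademacher's theorem it is differentiable almost
everywhere with `‖Dg‖ ≤ Lip g`, and differentiation under the integral sign gives
`Df(x) = -∫_{G - x} Dg`. Two such integrals differ by integrals of `Dg` over
`(G - x) \ (G - x')` and `(G - x') \ (G - x)`, so `Df` is Lipschitz as soon as
`vol((v + G) \ G) = O(‖v‖)`. This holds for a convex `G ⊇ B(z, r)`: `v + G` lies in the dilation
of `G` about `z` by the factor `1 + ‖v‖ / r`, whose volume exceeds that of `G` by `O(‖v‖)`.
-/

open MeasureTheory Set Pointwise Module Filter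
open scoped NNReal

theorem one_add_pow_le_one_add_two_pow_mul (n : ℕ) {t : ℝ} (ht₀ : 0 ≤ t) (ht₁ : t ≤ 1) :
    (1 + t) ^ n ≤ 1 + 2 ^ n * t := by
  have hchord := (convexOn_pow n).2 (mem_Ici.2 zero_le_one) (mem_Ici.2 zero_le_two)
    (sub_nonneg.2 ht₁) ht₀ (sub_add_cancel 1 t)
  simp only [smul_eq_mul, one_pow, mul_one] at hchord
  rw [show 1 - t + t * 2 = 1 + t by ring] at hchord
  linarith

section Geometry

variable {E : Type*} [NormedAddCommGroup E] [NormedSpace ℝ E]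

theorem Convex.vadd_subset_image_homothety {G : Set E} (hG : Convex ℝ G) {z : E} {r t : ℝ}
    (ht : 0 < t) (hball : Metric.closedBall z r ⊆ G) {v : E} (hv : ‖v‖ ≤ t * r) :
    v +ᵥ G ⊆ AffineMap.homothety z (1 + t) '' G := by
  rintro _ ⟨y, hy, rfl⟩
  have hw : z + t⁻¹ • v ∈ G := hball <| by
    rwa [Metric.mem_closedBall, dist_self_add_left, norm_smul,
      Real.norm_of_nonneg (inv_nonneg.2 ht.le), inv_mul_le_iff₀ ht]
  refine ⟨(1 + t)⁻¹ • y + (t / (1 + t)) • (z + t⁻¹ • v),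
    hG hy hw (by positivity) (by positivity) (by field_simp), ?_⟩
  have h1t : 1 + t ≠ 0 := by positivity
  rw [AffineMap.homothety_apply, vsub_eq_sub, vadd_eq_add]
  change _ = v + y
  match_scalars <;> field_simp
  ring

variable [MeasurableSpace E] [BorelSpace E] [FiniteDimensional ℝ E] (μ : Measure E)
  [μ.IsAddHaarMeasure]

theorem Convex.measureReal_vadd_sdiff_le {G : Set E} (hG : Convex ℝ G) (hGμ : μ G ≠ ⊤) {z : E}
    {r : ℝ} (hr : 0 < r) (hball : Metric.closedBall z r ⊆ G) (v : E) :
    μ.real ((v +ᵥ G) \ G) ≤ 2 ^ finrank ℝ E * μ.real G / r * ‖v‖ := by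
  refine ENNReal.toReal_le_of_le_ofReal (by positivity) ?_
  set t := ‖v‖ / r
  have hrhs : 2 ^ finrank ℝ E * μ.real G / r * ‖v‖ = 2 ^ finrank ℝ E * t * μ.real G := by
    simp only [t]; ring
  rw [hrhs, ENNReal.ofReal_mul (by positivity), measureReal_def, ENNReal.ofReal_toReal hGμ]
  rcases eq_or_ne v 0 with rfl | hv
  · simp
  have ht : 0 < t := by positivity
  rcases le_or_gt t 1 with ht₁ | ht₁
  · have hz : z ∈ interior G :=
      mem_interior_iff_mem_nhds.2 (mem_of_superset (Metric.closedBall_mem_nhds z hr) hball)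
    set H := AffineMap.homothety z (1 + t) '' G
    have hGH : G ⊆ H := (hG.subset_interior_image_homothety_of_one_lt hz _ (by linarith)).trans
      interior_subset
    have hvGH : v +ᵥ G ⊆ H := hG.vadd_subset_image_homothety ht hball (by simp [t, hr.ne'])
    have hH : μ H = ENNReal.ofReal ((1 + t) ^ finrank ℝ E) * μ G := by
      rw [Measure.addHaar_image_homothety, abs_of_pos (by positivity)]
    calc μ ((v +ᵥ G) \ G) ≤ μ (H \ G) := measure_mono (sdiff_subset_sdiff_left hvGH)
      _ = μ H - μ G := measure_sdiff hGH (hG.nullMeasurableSet μ) hGμ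
      _ ≤ ENNReal.ofReal (2 ^ finrank ℝ E * t) * μ G := by
        rw [hH, tsub_le_iff_left]
        calc ENNReal.ofReal ((1 + t) ^ finrank ℝ E) * μ G
            ≤ ENNReal.ofReal (1 + 2 ^ finrank ℝ E * t) * μ G := by
              gcongr; exact one_add_pow_le_one_add_two_pow_mul _ ht.le ht₁
          _ = μ G + ENNReal.ofReal (2 ^ finrank ℝ E * t) * μ G := by
              rw [ENNReal.ofReal_add zero_le_one (by positivity), ENNReal.ofReal_one, add_mul,
                one_mul]
  · have h2t : 1 ≤ 2 ^ finrank ℝ E * t :=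
      one_le_mul_of_one_le_of_one_le (one_le_pow₀ one_le_two) ht₁.le
    calc μ ((v +ᵥ G) \ G) ≤ μ (v +ᵥ G) := measure_mono sdiff_subset
      _ = μ G := measure_vadd μ v G
      _ ≤ ENNReal.ofReal (2 ^ finrank ℝ E * t) * μ G :=
        le_mul_of_one_le_left zero_le (ENNReal.one_le_ofReal.2 h2t)

end Geometry

theorem norm_setIntegral_sub_setIntegral_le {X F : Type*} [MeasurableSpace X]
    [NormedAddCommGroup F] [NormedSpace ℝ F] {μ : Measure X} {f : X → F} {M : ℝ}
    (hfm : AEStronglyMeasurable f μ) (hf : ∀ x, ‖f x‖ ≤ M) {s t : Set X} (hs : MeasurableSet s)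
    (ht : MeasurableSet t) (hsμ : μ s ≠ ⊤) (htμ : μ t ≠ ⊤) :
    ‖∫ x in s, f x ∂μ - ∫ x in t, f x ∂μ‖ ≤ M * μ.real (s \ t) + M * μ.real (t \ s) := by
  have hbound (u : Set X) (huμ : μ u ≠ ⊤) : IntegrableOn f u μ :=
    Measure.integrableOn_of_bounded huμ hfm (ae_of_all _ hf)
  have hsplit : ∫ x in s, f x ∂μ - ∫ x in t, f x ∂μ
      = ∫ x in s \ t, f x ∂μ - ∫ x in t \ s, f x ∂μ := by
    rw [← integral_inter_add_sdiff ht (hbound s hsμ), ← integral_inter_add_sdiff hs (hbound t htμ),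
      inter_comm]
    abel
  rw [hsplit]
  refine (norm_sub_le _ _).trans (add_le_add ?_ ?_) <;>
    exact norm_setIntegral_le_of_norm_le_const
      ((measure_mono sdiff_subset).trans_lt (lt_top_iff_ne_top.2 ‹_›)) fun x _ => hf x

section Translation

variable {E F : Type*} [NormedAddCommGroup E] [MeasurableSpace E] [MeasurableAdd E]
  [NormedAddCommGroup F] [NormedSpace ℝ F] {μ : Measure E} [μ.IsAddLeftInvariant]

theorem setIntegral_comp_sub_right (f : E → F) (s : Set E) (x : E) :
    ∫ y in s, f (y - x) ∂μ = ∫ z in -x +ᵥ s, f z ∂μ := by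
  rw [← image_vadd, (measurePreserving_vadd (-x) μ).setIntegral_image_emb
    (measurableEmbedding_const_vadd (-x))]
  simp only [vadd_eq_add, neg_add_eq_sub]

theorem lipschitzWith_setIntegral_comp_sub {D : E → F} {M : ℝ} (hDm : AEStronglyMeasurable D μ)
    (hD : ∀ z, ‖D z‖ ≤ M) {s : Set E} (hs : MeasurableSet s) (hsμ : μ s ≠ ⊤) {c : ℝ}
    (hc : ∀ v : E, μ.real ((v +ᵥ s) \ s) ≤ c * ‖v‖) :
    LipschitzWith (2 * M * c).toNNReal (fun x => ∫ y in s, D (y - x) ∂μ) := by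
  have hM : 0 ≤ M := (norm_nonneg _).trans (hD 0)
  have hdiff (x x' : E) : μ.real ((-x +ᵥ s) \ (-x' +ᵥ s)) ≤ c * ‖x - x'‖ := by
    have hset : (-x +ᵥ s) \ (-x' +ᵥ s) = -x' +ᵥ (((x' - x) +ᵥ s) \ s) := by
      rw [vadd_set_sdiff, vadd_vadd, show -x' + (x' - x) = -x by abel]
    rw [hset, measureReal_def, measure_vadd, ← measureReal_def, norm_sub_rev]
    exact hc _
  refine LipschitzWith.of_dist_le' fun x x' => ?_
  rw [dist_eq_norm, dist_eq_norm, setIntegral_comp_sub_right, setIntegral_comp_sub_right]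
  calc _ ≤ M * μ.real ((-x +ᵥ s) \ (-x' +ᵥ s)) + M * μ.real ((-x' +ᵥ s) \ (-x +ᵥ s)) :=
        norm_setIntegral_sub_setIntegral_le hDm hD (hs.const_vadd _) (hs.const_vadd _)
          (by rwa [measure_vadd]) (by rwa [measure_vadd])
    _ ≤ M * (c * ‖x - x'‖) + M * (c * ‖x' - x‖) := by gcongr <;> exact hdiff _ _
    _ = 2 * M * c * ‖x - x'‖ := by rw [norm_sub_rev x']; ring

end Translation

section Differentiation

variable {E F : Type*} [NormedAddCommGroup E] [NormedSpace ℝ E] [FiniteDimensional ℝ E]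
  [MeasurableSpace E] [BorelSpace E] {μ : Measure E} [μ.IsAddHaarMeasure]
  [NormedAddCommGroup F] [NormedSpace ℝ F] [FiniteDimensional ℝ F]

theorem hasFDerivAt_setIntegral_comp_sub {g : E → F} {C : ℝ≥0} (hg : LipschitzWith C g)
    {s : Set E} (hs : IsCompact s) (x₀ : E) :
    HasFDerivAt (fun x => ∫ y in s, g (y - x) ∂μ) (-∫ y in s, fderiv ℝ g (y - x₀) ∂μ) x₀ := by
  have hcont (x : E) : Continuous fun y => g (y - x) := hg.continuous.comp (continuous_sub_right x)
  have hlip (y : E) : LipschitzOnWith (Real.nnabs C) (fun x => g (y - x)) univ := by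
    rw [Real.nnabs_coe, lipschitzOnWith_univ]
    exact LipschitzWith.of_dist_le_mul fun x x' => by
      simpa only [dist_sub_left] using hg.dist_le_mul (y - x) (y - x')
  have hdiff : ∀ᵐ y ∂μ.restrict s, HasFDerivAt (fun x => g (y - x)) (-fderiv ℝ g (y - x₀)) x₀ := by
    refine ae_restrict_of_ae ?_
    filter_upwards [(measurePreserving_sub_right μ x₀).quasiMeasurePreserving.ae
      hg.ae_differentiableAt] with y hy
    simpa [Function.comp_def] using hy.hasFDerivAt.comp x₀ ((hasFDerivAt_id x₀).const_sub y)
  rw [← integral_neg]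
  exact (hasFDerivAt_integral_of_dominated_loc_of_lip univ_mem
    (Eventually.of_forall fun x => (hcont x).aestronglyMeasurable)
    ((hcont x₀).continuousOn.integrableOn_compact hs)
    ((measurable_fderiv ℝ g).comp (measurable_sub_const x₀)).neg.aestronglyMeasurable
    (ae_of_all _ hlip) (integrableOn_const hs.measure_ne_top) hdiff).2

end Differentiation

theorem gauge_potential_C11_general
    (N : ℕ) (K G : Set (EuclideanSpace ℝ (Fin N)))
    (hK_conv : Convex ℝ K)
    (hK0 : (0 : EuclideanSpace ℝ (Fin N)) ∈ interior K)
    (hG_conv : Convex ℝ G) (hG_comp : IsCompact G)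
    (hG_int : (interior G).Nonempty) :
    Differentiable ℝ (fun x => ∫ y in G, gauge K (y - x)) ∧
      ∃ C : NNReal, LipschitzWith C (fderiv ℝ (fun x => ∫ y in G, gauge K (y - x))) := by
  obtain ⟨C, hC⟩ := hK_conv.lipschitz_gauge (mem_interior_iff_mem_nhds.1 hK0)
  have hderiv := hasFDerivAt_setIntegral_comp_sub (μ := volume) hC hG_comp
  obtain ⟨z, hz⟩ := hG_int
  obtain ⟨r, hr, hball⟩ :=
    Metric.nhds_basis_closedBall.mem_iff.1 (mem_interior_iff_mem_nhds.1 hz)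
  refine ⟨fun x => (hderiv x).differentiableAt, ?_⟩
  rw [funext fun x => (hderiv x).fderiv]
  exact ⟨_, (lipschitzWith_setIntegral_comp_sub (measurable_fderiv ℝ _).aestronglyMeasurable
    (fun _ => norm_fderiv_le_of_lipschitz ℝ hC) hG_comp.isClosed.measurableSet
    hG_comp.measure_ne_top
    (hG_conv.measureReal_vadd_sdiff_le volume hG_comp.measure_ne_top hr hball)).neg⟩

/-- **Theorem 2.5 (regularity of the potential, key step).** Let `K ⊂ ℝ^N` be a convex body
containing the origin in its interior and `G ⊂ ℝ^N` a bounded convex body.  Then the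
function `f(x) = ∫_G ‖y - x‖_K dy` is everywhere differentiable and its gradient is
Lipschitz continuous on `ℝ^N`. -/
theorem gauge_potential_C11
    (N : ℕ) (K G : Set (EuclideanSpace ℝ (Fin N)))
    (hK_conv : Convex ℝ K) (hK_comp : IsCompact K)
    (hK0 : (0 : EuclideanSpace ℝ (Fin N)) ∈ interior K)
    (hG_conv : Convex ℝ G) (hG_comp : IsCompact G)
    (hG_int : (interior G).Nonempty) :
    Differentiable ℝ (fun x => ∫ y in G, gauge K (y - x)) ∧
      ∃ C : NNReal, LipschitzWith C (fderiv ℝ (fun x => ∫ y in G, gauge K (y - x))) :=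
  gauge_potential_C11_general N K G hK_conv hK0 hG_conv hG_comp hG_int
end

section
/- Let K ⊂ ℝ^N be a convex body containing the origin in its interior and let G ⊂ ℝ^N be a compact convex body such that max_{y ∈ G} ‖y − x‖_K = 1 for every x ∈ ∂G. Then G − G ⊆ K, where G − G = {y − z : y, z ∈ G} is the Minkowski difference set. -/
open MeasureTheory Set Pointwise
open scoped ENNReal

/-- **Theorem 2.7 (a), first inclusion.** Let `K ⊂ ℝ^N` be a convex body containing the
origin in its interior and `G ⊂ ℝ^N` a compact convex body such that
`max_{y ∈ G} ‖y - x‖_K = 1` for every `x ∈ ∂G`.  Then `G - G ⊆ K`. -/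
theorem diff_body_subset_of_max_gauge_one
    (N : ℕ) (K G : Set (EuclideanSpace ℝ (Fin N)))
    (hK_conv : Convex ℝ K) (hK_comp : IsCompact K)
    (hK0 : (0 : EuclideanSpace ℝ (Fin N)) ∈ interior K)
    (hG_conv : Convex ℝ G) (hG_comp : IsCompact G)
    (hG_int : (interior G).Nonempty)
    (hmax : ∀ x ∈ frontier G, IsGreatest ((fun y => gauge K (y - x)) '' G) 1) :
    G - G ⊆ K := by
  have hKnhds : K ∈ nhds (0 : EuclideanSpace ℝ (Fin N)) :=
    mem_interior_iff_mem_nhds.1 hK0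
  have hKclosed : IsClosed K := hK_comp.isClosed
  have key : ∀ w, gauge K w ≤ 1 → w ∈ K := by
    intro w hw
    have := (gauge_le_one_iff_mem_closure hK_conv hKnhds).1 hw
    rwa [hKclosed.closure_eq] at this
  rintro w ⟨y, hy, z, hz, rfl⟩
  by_cases hyz : y = z
  · subst hyz
    simpa using key 0 (by simp [gauge_zero])
  -- consider the ray from y through z
  set v : EuclideanSpace ℝ (Fin N) := z - y with hv
  have hv0 : v ≠ 0 := sub_ne_zero.2 (Ne.symm hyz)
  set S : Set ℝ := {t : ℝ | 0 ≤ t ∧ y + t • v ∈ G} with hS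
  have hScont : Continuous fun t : ℝ => y + t • v := by continuity
  have hSclosed : IsClosed S :=
    (isClosed_Ici.preimage continuous_id).inter (hG_comp.isClosed.preimage hScont)
  have hSne : (1 : ℝ) ∈ S := ⟨zero_le_one, by simpa [hv] using hz⟩
  obtain ⟨C, hC⟩ := hG_comp.isBounded.subset_closedBall y
  have hSbdd : BddAbove S := by
    refine ⟨C / ‖v‖, fun t ht => ?_⟩
    have h1 : y + t • v ∈ Metric.closedBall y C := hC ht.2
    have h2 : ‖t • v‖ ≤ C := by
      have := Metric.mem_closedBall.1 h1
      simpa [dist_eq_norm] using this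
    rw [norm_smul, Real.norm_eq_abs, abs_of_nonneg ht.1] at h2
    rw [le_div_iff₀ (norm_pos_iff.2 hv0)]
    exact h2
  set r : ℝ := sSup S with hr
  have hrS : r ∈ S := hSclosed.csSup_mem ⟨1, hSne⟩ hSbdd
  have hr1 : 1 ≤ r := le_csSup hSbdd hSne
  set x : EuclideanSpace ℝ (Fin N) := y + r • v with hx
  have hxG : x ∈ G := hrS.2
  have hxfr : x ∈ frontier G := by
    rw [frontier, mem_diff]
    refine ⟨subset_closure hxG, fun hxint => ?_⟩
    -- preimage of interior G is open and contains r
    have hopen : IsOpen ((fun t : ℝ => y + t • v) ⁻¹' interior G) :=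
      isOpen_interior.preimage hScont
    have hrmem : r ∈ (fun t : ℝ => y + t • v) ⁻¹' interior G := hxint
    obtain ⟨ε, hε, hball⟩ := Metric.isOpen_iff.1 hopen r hrmem
    have : r + ε / 2 ∈ S := by
      refine ⟨by positivity, ?_⟩
      have : r + ε / 2 ∈ Metric.ball r ε := by
        rw [Metric.mem_ball, Real.dist_eq, show r + ε/2 - r = ε/2 by ring,
          abs_of_pos (by positivity)]
        linarith
      exact interior_subset (hball this)
    have := le_csSup hSbdd this
    linarith
  have hmaxx := hmax x hxfr
  have hle : gauge K (y - x) ≤ 1 := hmaxx.2 ⟨y, hy, rfl⟩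
  have hyx : y - x = r • (y - z) := by
    rw [hx, hv]
    module
  have hrpos : 0 < r := lt_of_lt_of_le one_pos hr1
  have hgauge : gauge K (y - z) ≤ 1 := by
    have : gauge K (r • (y - z)) = r * gauge K (y - z) :=
      gauge_smul_of_nonneg hrpos.le _
    rw [hyx, this] at hle
    nlinarith [gauge_nonneg (s := K) (y - z)]
  exact key _ hgauge
end

section
/- Let K ⊂ ℝ^N be a convex body containing the origin in its interior and let G ⊂ ℝ^N be a convex body. Let x ∈ ∂G and suppose that ν ∈ S^{N−1} is the unique unit vector w for which the half-space {y : ⟨y − x, w⟩ ≥ 0} contains G (i.e. G has a unique supporting hyperplane at x, with inward unit normal ν). Then lim_{r→0⁺} vol(G ∩ (x + rK)) / vol(rK) = vol(K ∩ H_ν⁺) / vol(K), where H_ν⁺ = {y ∈ ℝ^N : ⟨y, ν⟩ ≥ 0}. -/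
open MeasureTheory Set Pointwise Filter
open scoped ENNReal Topology RealInnerProductSpace

/-!
Translate `x` to the origin and rescale by `r⁻¹`: the ratio becomes
`vol(K ∩ r⁻¹ • (G - x)) / vol K`. As `r → 0⁺` the dilates `r⁻¹ • (G - x)` increase to the cone
`C` generated by `G - x`, so the numerator tends to `vol(K ∩ C)`. Separating a point from the
closed cone `closure C` produces an inward normal of `G` at `x`; since `ν` is the only one,
`C ⊆ H_ν⁺ ⊆ closure C`, and as the frontier of the convex set `C` is null,
`vol(K ∩ C) = vol(K ∩ H_ν⁺)`.
-/

theorem StarConvex.smul_subset_smul_of_le {𝕜 E : Type*} [Field 𝕜] [LinearOrder 𝕜]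
    [IsStrictOrderedRing 𝕜] [AddCommGroup E] [Module 𝕜 E] {s : Set E}
    (hs : StarConvex 𝕜 0 s) {a b : 𝕜} (ha : 0 < a) (hab : a ≤ b) : a • s ⊆ b • s := by
  have hba : b = a * (b / a) := by field_simp
  rw [hba, mul_smul, smul_set_subset_smul_set_iff₀ ha.ne']
  exact fun y hy => hs.mem_smul hy ((one_le_div ha).2 hab)

theorem halfSpace_subset_closure_convexConeHull {E : Type*} [NormedAddCommGroup E]
    [InnerProductSpace ℝ E] [CompleteSpace E] {D : Set E} (hD0 : (0 : E) ∈ D) {ν : E}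
    (hν : ∀ w : E, ‖w‖ = 1 → (∀ d ∈ D, 0 ≤ ⟪d, w⟫) → w = ν) :
    {y | 0 ≤ ⟪y, ν⟫} ⊆ closure (ConvexCone.hull ℝ D : Set E) := by
  intro z hz
  by_contra hzC
  let P : ProperCone ℝ E :=
    Submodule.closure ((ConvexCone.hull ℝ D).toPointedCone (ConvexCone.subset_hull hD0))
  obtain ⟨y, hyP, hzy⟩ := P.hyperplane_separation' (x₀ := z) hzC
  have hy : y ≠ 0 := by rintro rfl; simp at hzy
  have hyν : ‖y‖⁻¹ • y = ν := hν _ (norm_smul_inv_norm hy) fun d hd => by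
    rw [real_inner_smul_right]
    exact mul_nonneg (by positivity) (hyP d (subset_closure (ConvexCone.subset_hull hd)))
  have : ⟪z, ν⟫ < 0 := by
    rw [← hyν, real_inner_smul_right]
    exact mul_neg_of_pos_of_neg (by positivity) hzy
  exact this.not_ge hz

theorem Convex.tendsto_measure_inter_smul_atTop {E : Type*} [AddCommGroup E] [Module ℝ E]
    [MeasurableSpace E] {D : Set E} (hD : Convex ℝ D) (hD0 : (0 : E) ∈ D) (μ : Measure E)
    (K : Set E) :
    Tendsto (fun t : ℝ => μ (K ∩ t • D)) atTop (𝓝 (μ (K ∩ ConvexCone.hull ℝ D))) := by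
  have hstar : StarConvex ℝ 0 D := hD.starConvex hD0
  -- `t • D` is monotone in `t` only for `t > 0`, hence the truncation `max t 1`.
  have hmono : Monotone fun t : ℝ => K ∩ max t 1 • D := fun a b hab =>
    inter_subset_inter_right K
      (hstar.smul_subset_smul_of_le (by positivity) (max_le_max_right 1 hab))
  have hunion : (⋃ t : ℝ, K ∩ max t 1 • D) = K ∩ ConvexCone.hull ℝ D := by
    rw [← inter_iUnion]
    congr 1
    ext y
    simp only [mem_iUnion, SetLike.mem_coe, ConvexCone.mem_hull_of_convex hD]
    exact ⟨fun ⟨t, ht⟩ => ⟨_, by positivity, ht⟩,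
      fun ⟨r, hr, hy⟩ => ⟨r, hstar.smul_subset_smul_of_le hr (le_max_left r 1) hy⟩⟩
  refine (hunion ▸ tendsto_measure_iUnion_atTop hmono).congr' ?_
  filter_upwards [eventually_ge_atTop 1] with t ht
  simp [max_eq_left ht]

theorem Convex.ae_eq_of_subset_of_subset_closure {E : Type*} [NormedAddCommGroup E]
    [NormedSpace ℝ E] [MeasurableSpace E] [BorelSpace E] [FiniteDimensional ℝ E]
    (μ : Measure E) [μ.IsAddHaarMeasure] {s t : Set E} (hs : Convex ℝ s) (hst : s ⊆ t)
    (hts : t ⊆ closure s) : t =ᵐ[μ] s :=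
  (hts.eventuallyLE.trans (closure_ae_eq_of_null_frontier (hs.addHaar_frontier μ)).le).antisymm
    hst.eventuallyLE

theorem addHaar_inter_vadd_smul_div {E : Type*} [NormedAddCommGroup E]
    [NormedSpace ℝ E] [MeasurableSpace E] [BorelSpace E] [FiniteDimensional ℝ E]
    (μ : Measure E) [μ.IsAddHaarMeasure] (G K : Set E) (x : E) {r : ℝ} (hr : 0 < r) :
    μ (G ∩ (x +ᵥ r • K)) / μ (r • K) = μ (K ∩ r⁻¹ • (-x +ᵥ G)) / μ K := by
  have hG : G ∩ (x +ᵥ r • K) = x +ᵥ r • (K ∩ r⁻¹ • (-x +ᵥ G)) := by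
    rw [smul_set_inter₀ hr.ne', smul_smul, mul_inv_cancel₀ hr.ne', one_smul, vadd_set_inter,
      vadd_vadd, add_neg_cancel, zero_vadd, inter_comm]
  rw [hG, measure_vadd, Measure.addHaar_smul_of_nonneg μ hr.le,
    Measure.addHaar_smul_of_nonneg μ hr.le,
    ENNReal.mul_div_mul_left _ _ (by simp [hr]) ENNReal.ofReal_ne_top]

theorem density_first_order_limit_general
    (N : ℕ) (K G : Set (EuclideanSpace ℝ (Fin N)))
    (hK0 : (0 : EuclideanSpace ℝ (Fin N)) ∈ interior K)
    (hG_conv : Convex ℝ G) (hG_comp : IsCompact G)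
    (x : EuclideanSpace ℝ (Fin N)) (hx : x ∈ frontier G)
    (ν : EuclideanSpace ℝ (Fin N))
    (hν : {w : EuclideanSpace ℝ (Fin N) | ‖w‖ = 1 ∧
        ∀ y ∈ G, 0 ≤ (inner ℝ (y - x) w : ℝ)} = {ν}) :
    Tendsto (fun r : ℝ => volume (G ∩ (x +ᵥ r • K)) / volume (r • K))
      (𝓝[>] (0 : ℝ))
      (𝓝 (volume (K ∩ {y | 0 ≤ (inner ℝ y ν : ℝ)}) / volume K)) := by
  set D := -x +ᵥ G
  have hD : Convex ℝ D := hG_conv.vadd (-x)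
  have hD0 : (0 : EuclideanSpace ℝ (Fin N)) ∈ D :=
    ⟨x, hG_comp.isClosed.frontier_subset hx, neg_add_cancel x⟩
  have hnormal : ∀ w, (‖w‖ = 1 ∧ ∀ d ∈ D, 0 ≤ ⟪d, w⟫) ↔ w = ν := fun w => by
    rw [← mem_singleton_iff (a := w), ← hν]
    simp [D, ← image_vadd, neg_add_eq_sub]
  have hνD : ∀ d ∈ D, 0 ≤ ⟪d, ν⟫ := ((hnormal ν).2 rfl).2
  have hCH : (ConvexCone.hull ℝ D : Set _) ⊆ {y | 0 ≤ ⟪y, ν⟫} := by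
    intro _ h
    obtain ⟨r, hr, d, hd, rfl⟩ := (ConvexCone.mem_hull_of_convex hD).1 h
    simpa [real_inner_smul_left] using mul_nonneg hr.le (hνD d hd)
  have hHC : {y | 0 ≤ ⟪y, ν⟫} ⊆ closure (ConvexCone.hull ℝ D : Set _) :=
    halfSpace_subset_closure_convexConeHull hD0 fun w hw hwD => (hnormal w).1 ⟨hw, hwD⟩
  rw [measure_congr (EventuallyEq.rfl.inter
    ((ConvexCone.hull ℝ D).convex.ae_eq_of_subset_of_subset_closure volume hCH hHC))]
  have hK : volume K ≠ 0 := (Measure.measure_pos_of_nonempty_interior _ ⟨0, hK0⟩).ne'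
  refine (ENNReal.Tendsto.div_const ((hD.tendsto_measure_inter_smul_atTop hD0 volume K).comp
    tendsto_inv_nhdsGT_zero) (Or.inr hK)).congr' ?_
  filter_upwards [self_mem_nhdsWithin] with r hr
  exact (addHaar_inter_vadd_smul_div volume G K x hr).symm

/-- **Theorem 3.1 (first-order asymptotics).** Let `K ⊂ ℝ^N` be a convex body containing
the origin in its interior and `G ⊂ ℝ^N` a convex body.  Let `x ∈ ∂G` and suppose `ν` is
the unique inward unit normal of `G` at `x`.  Then
`vol(G ∩ (x + rK)) / vol(rK) → vol(K ∩ H_ν⁺) / vol(K)` as `r → 0⁺`. -/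
theorem density_first_order_limit
    (N : ℕ) (K G : Set (EuclideanSpace ℝ (Fin N)))
    (hK_conv : Convex ℝ K) (hK_comp : IsCompact K)
    (hK0 : (0 : EuclideanSpace ℝ (Fin N)) ∈ interior K)
    (hG_conv : Convex ℝ G) (hG_comp : IsCompact G)
    (hG_int : (interior G).Nonempty)
    (x : EuclideanSpace ℝ (Fin N)) (hx : x ∈ frontier G)
    (ν : EuclideanSpace ℝ (Fin N))
    (hν : {w : EuclideanSpace ℝ (Fin N) | ‖w‖ = 1 ∧
        ∀ y ∈ G, 0 ≤ (inner ℝ (y - x) w : ℝ)} = {ν}) :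
    Tendsto (fun r : ℝ => volume (G ∩ (x +ᵥ r • K)) / volume (r • K))
      (𝓝[>] (0 : ℝ))
      (𝓝 (volume (K ∩ {y | 0 ≤ (inner ℝ y ν : ℝ)}) / volume K)) :=
  density_first_order_limit_general N K G hK0 hG_conv hG_comp x hx ν hν
end
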